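/- arXiv:1206.1152 — 5 statements merged into one kernel-verified Lean document; each statement's English description precedes it below -/
import Mathlib

section
/- (Theorem 1) Let n_1,…,n_s ≥ 2 be weights, I := {1,…,s}, and for every subset J ⊆ I put n_J := lcm(n_i : i ∈ J) with n_∅ := 1, and e_J := (∏_{i∈J} n_i)/n_J ∈ ℕ. Then in ℤ[X] one has the identity ∏_{J ⊆ I, s−|J| even} (X^{n_J} − 1)^{e_J} = χ_{[n_1,…,n_s]} · ∏_{J ⊆ I, s−|J| odd} (X^{n_J} − 1)^{e_J}; that is, χ_{[n_1,…,n_s]} = ∏_{J ⊆ I} ((X^{n_J} − 1)^{e_J})^{(−1)^{s−|J|}} as a rational function. -/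
open Matrix Polynomial

/-- The Coxeter matrix `Φ_[n]` of the linearly oriented quiver of type `A_{n-1}`:
the `(n-1) × (n-1)` integer matrix whose `(i,j)`-entry is `1` if `j = i + 1`
(for rows other than the last), whose last row has all entries `-1`, and whose
other entries are `0`. -/
def PhiA (n : ℕ) : Matrix (Fin (n - 1)) (Fin (n - 1)) ℤ :=
  fun i j =>
    if (i : ℕ) = n - 2 then -1
    else if (j : ℕ) = (i : ℕ) + 1 then 1 else 0

/-- The Kronecker (tensor) product `Φ_{[n_1,…,n_s]} = Φ_{[n_1]} ⊗ ⋯ ⊗ Φ_{[n_s]}`,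
realized on the index type `Π i, Fin (n i - 1)`. -/
def PhiProd {s : ℕ} (n : Fin s → ℕ) :
    Matrix ((i : Fin s) → Fin (n i - 1)) ((i : Fin s) → Fin (n i - 1)) ℤ :=
  fun x y => ∏ i, PhiA (n i) (x i) (y i)

/-- The characteristic polynomial `χ_{[n_1,…,n_s]} ∈ ℤ[X]` of `Φ_{[n_1,…,n_s]}`. -/
noncomputable def Chi {s : ℕ} (n : Fin s → ℕ) : Polynomial ℤ :=
  (PhiProd n).charpoly

/-- The standard primitive complex `m`-th root of unity `exp(2π√-1/m)`. -/
noncomputable def zeta (m : ℕ) : ℂ := Complex.exp (2 * Real.pi * Complex.I / m)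

/-!
Over `ℂ`, `Φ_[m]` is the companion matrix of `1 + X + ⋯ + X^(m-1)`, so it is diagonalised by a
Vandermonde matrix with eigenvalues the nontrivial `m`-th roots of unity; hence the eigenvalues
of `Φ_{[n_1,…,n_s]}` are the products `ζ_1^{a_1} ⋯ ζ_s^{a_s}` with `0 < a_i < n_i`.

Multisets of roots are handled in the semiring `ℕ[ℂ]`, where multiplication multiplies roots
pairwise. There `U_i = ∑_{a < n_i} [ζ_i^a]` splits as `1 + T_i`, with `T_i` the sum over
`0 < a < n_i`, and `∏_{i ∈ J} U_i` is the root multiset of `(X^{n_J} - 1)^{e_J}`: the products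
`∏_{i ∈ J} ζ_i^{a_i}` run `e_J` times over the `n_J`-th roots of unity. Expanding
`∏_{i ∈ J} (1 + T_i) = ∑_{K ⊆ J} ∏_{i ∈ K} T_i` and inverting over the Boolean lattice (the
numbers of even and odd `J ⊇ K` agree unless `K = I`) isolates `∏_{i ∈ I} T_i`, the root
multiset of `χ`.
-/

open Finset

theorem Function.Periodic.prod_range_mul {M : Type*} [CommMonoid M] {f : ℕ → M} {m : ℕ}
    (hf : Function.Periodic f m) (g : ℕ) :
    ∏ b ∈ range (g * m), f b = (∏ b ∈ range m, f b) ^ g := by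
  induction g with
  | zero => simp
  | succ g ih =>
    rw [Nat.succ_mul, prod_range_add, ih, pow_succ]
    congr 1
    exact prod_congr rfl fun b _ => by rw [add_comm]; exact hf.nat_mul g b

theorem IsPrimitiveRoot.pow_div_gcd {M : Type*} [CommMonoid M] {ζ : M} {p : ℕ}
    (hζ : IsPrimitiveRoot ζ p) (hp : 0 < p) (L : ℕ) :
    IsPrimitiveRoot (ζ ^ L) (p / p.gcd L) := by
  rcases L.eq_zero_or_pos with rfl | hL
  · simp [Nat.div_self hp]
  · simpa [orderOf_pow' ζ hL.ne', ← hζ.eq_orderOf] using IsPrimitiveRoot.orderOf (ζ ^ L)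

theorem prod_range_X_pow_sub_C_mul_pow {K : Type*} [CommRing K] [IsDomain K] {η : K} {m : ℕ}
    (hη : IsPrimitiveRoot η m) (hm : 0 < m) (q : ℕ) (d : K) :
    ∏ b ∈ range m, (X ^ q - C (d * η ^ b)) = X ^ (q * m) - C (d ^ m) := by
  have h := congrArg (expand K q) (X_pow_sub_C_eq_prod hη hm (rfl : d ^ m = d ^ m))
  simp only [map_sub, map_pow, expand_X, expand_C, map_prod] at h
  rw [← pow_mul, ← C_pow] at h
  rw [h]
  exact prod_congr rfl fun b _ => by rw [mul_comm]

section RootProd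

variable {K : Type*} [CommRing K]

open MonoidAlgebra

/-- An element of `ℕ[K]` is a finite multiset of elements of `K`; `rootProd` is the monic
polynomial with exactly these roots. -/
noncomputable def rootProd (f : MonoidAlgebra ℕ K) : K[X] :=
  f.coeff.prod fun a k => (X - C a) ^ k

@[simp]
theorem rootProd_zero : rootProd (0 : MonoidAlgebra ℕ K) = 1 :=
  Finsupp.prod_zero_index

@[simp]
theorem rootProd_single (a : K) : rootProd (single a 1) = X - C a := by
  simp [rootProd, coeff_single]

theorem rootProd_add (f g : MonoidAlgebra ℕ K) : rootProd (f + g) = rootProd f * rootProd g :=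
  Finsupp.prod_add_index' (fun _ => pow_zero _) fun _ _ _ => pow_add _ _ _

theorem rootProd_sum {ι : Type*} (s : Finset ι) (f : ι → MonoidAlgebra ℕ K) :
    rootProd (∑ i ∈ s, f i) = ∏ i ∈ s, rootProd (f i) := by
  induction s using Finset.cons_induction with
  | empty => simp
  | cons i s hi ih => rw [sum_cons, prod_cons, rootProd_add, ih]

noncomputable def powersSum (ζ : K) (m : ℕ) : MonoidAlgebra ℕ K :=
  ∑ b ∈ range m, single (ζ ^ b) 1

def nontrivialPowers {M : Type*} [Monoid M] (ζ : M) (m : ℕ) (k : Fin (m - 1)) : M :=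
  ζ ^ ((k : ℕ) + 1)

theorem powersSum_eq_one_add (ζ : K) {m : ℕ} (hm : 0 < m) :
    powersSum ζ m = 1 + ∑ k, single (nontrivialPowers ζ m k) 1 := by
  obtain ⟨m, rfl⟩ := Nat.exists_eq_add_one_of_ne_zero hm.ne'
  rw [powersSum, sum_range_succ', add_comm, pow_zero, ← one_def]
  exact congrArg _ (Fin.sum_univ_eq_sum_range (fun k => single (ζ ^ (k + 1)) 1) m).symm

theorem rootProd_single_mul_prod_powersSum [IsDomain K] {ι : Type*} [DecidableEq ι]
    {ζ : ι → K} {n : ι → ℕ} (hζ : ∀ i, IsPrimitiveRoot (ζ i) (n i)) (hn : ∀ i, 0 < n i)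
    (J : Finset ι) (c : K) :
    rootProd (single c 1 * ∏ i ∈ J, powersSum (ζ i) (n i))
      = (X ^ J.lcm n - C (c ^ J.lcm n)) ^ ((∏ i ∈ J, n i) / J.lcm n) := by
  induction J using Finset.induction_on generalizing c with
  | empty => simp
  | insert j J hj ih =>
    set L := J.lcm n
    set e := (∏ i ∈ J, n i) / L
    set g := (n j).gcd L
    set m := n j / g
    have hL : 0 < L := Nat.pos_of_ne_zero fun h => by
      obtain ⟨i, -, hi⟩ := Finset.lcm_eq_zero_iff.mp h
      exact (hn i).ne' hi
    have hgm : g * m = n j := Nat.mul_div_cancel' (Nat.gcd_dvd_left _ _)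
    have hm : 0 < m := Nat.div_pos (Nat.gcd_le_left _ (hn j)) (Nat.gcd_pos_of_pos_left _ (hn j))
    have hη : IsPrimitiveRoot (ζ j ^ L) m := (hζ j).pow_div_gcd (hn j) L
    have hlcm : (insert j J).lcm n = L * m := by
      rw [Finset.lcm_insert, lcm_eq_nat_lcm, Nat.lcm_comm, Nat.lcm, Nat.gcd_comm,
        Nat.mul_div_assoc _ (Nat.gcd_dvd_left _ _)]
    have hexp : (∏ i ∈ insert j J, n i) / (L * m) = g * e := by
      have hLe : L * e = ∏ i ∈ J, n i :=
        Nat.mul_div_cancel' (Finset.lcm_dvd fun i hi => Finset.dvd_prod_of_mem n hi)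
      rw [prod_insert hj, ← hLe, ← hgm]
      exact Nat.div_eq_of_eq_mul_left (Nat.mul_pos hL hm) (by ring)
    have hper : Function.Periodic (fun b => (X : K[X]) ^ L - C (c ^ L * (ζ j ^ L) ^ b)) m :=
      fun b => by simp only [pow_add, hη.pow_eq_one, mul_one]
    calc rootProd (single c 1 * ∏ i ∈ insert j J, powersSum (ζ i) (n i))
        = rootProd (∑ b ∈ range (n j),
            single (c * ζ j ^ b) 1 * ∏ i ∈ J, powersSum (ζ i) (n i)) := by
          simp only [prod_insert hj, powersSum, ← mul_assoc, mul_sum, sum_mul, single_mul_single,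
            mul_one]
      _ = ∏ b ∈ range (g * m), (X ^ L - C (c ^ L * (ζ j ^ L) ^ b)) ^ e := by
          rw [rootProd_sum, hgm]
          exact prod_congr rfl fun b _ => by rw [ih, mul_pow, ← pow_mul, ← pow_mul, mul_comm b]
      _ = ((X ^ (L * m) - C ((c ^ L) ^ m)) ^ g) ^ e := by
          rw [prod_pow, hper.prod_range_mul, prod_range_X_pow_sub_C_mul_pow hη hm]
      _ = _ := by rw [hlcm, hexp, ← pow_mul, ← pow_mul]

end RootProd

section Mobius

variable {ι : Type*} [Fintype ι] [DecidableEq ι]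

theorem card_even_compl_supset (K : Finset ι) :
    #{J | Even #Jᶜ ∧ K ⊆ J} = #{J | ¬Even #Jᶜ ∧ K ⊆ J} + if K = univ then 1 else 0 := by
  have hsum : ∑ J with K ⊆ J, (-1 : ℤ) ^ #Jᶜ = ∑ T ∈ Kᶜ.powerset, (-1) ^ #T :=
    sum_nbij' compl compl (by simp) (by simp [subset_compl_comm]) (fun _ _ => compl_compl _)
      (fun _ _ => compl_compl _) (fun _ _ => rfl)
  simp only [sum_powerset_neg_one_pow_card, compl_eq_empty_iff] at hsum
  rw [← sum_filter_add_sum_filter_not _ (fun J => Even #Jᶜ), filter_filter, filter_filter,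
    sum_congr rfl fun J hJ => (mem_filter.mp hJ).2.2.neg_one_pow,
    sum_congr rfl fun J hJ => (Nat.not_even_iff_odd.mp (mem_filter.mp hJ).2.2).neg_one_pow] at hsum
  simp only [sum_const, nsmul_eq_mul, mul_one, mul_neg] at hsum
  simp only [and_comm (a := K ⊆ _)] at hsum
  split_ifs at hsum ⊢ <;> omega

theorem sum_sum_powerset_eq_sum_card_smul {M : Type*} [AddCommMonoid M] (S : Finset (Finset ι))
    (f : Finset ι → M) :
    ∑ J ∈ S, ∑ K ∈ J.powerset, f K = ∑ K, #{J ∈ S | K ⊆ J} • f K := by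
  rw [sum_comm' (t' := univ) (s' := fun K => {J ∈ S | K ⊆ J}) (by simp [and_comm])]
  simp only [sum_const]

theorem sum_even_compl_sum_powerset {M : Type*} [AddCommMonoid M] (f : Finset ι → M) :
    ∑ J with Even #Jᶜ, ∑ K ∈ J.powerset, f K
      = f univ + ∑ J with ¬Even #Jᶜ, ∑ K ∈ J.powerset, f K := by
  simp only [sum_sum_powerset_eq_sum_card_smul, filter_filter, card_even_compl_supset, add_smul,
    sum_add_distrib, ite_smul, one_smul, zero_smul, sum_ite_eq', mem_univ, if_true, add_comm]

end Mobius

namespace Matrix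

section PiKronecker

variable {ι R : Type*} [Fintype ι] {κ : ι → Type*} [CommSemiring R]

def piKronecker (M : ∀ i, Matrix (κ i) (κ i) R) : Matrix (∀ i, κ i) (∀ i, κ i) R :=
  fun x y => ∏ i, M i (x i) (y i)

theorem piKronecker_mul [DecidableEq ι] [∀ i, Fintype (κ i)] (M N : ∀ i, Matrix (κ i) (κ i) R) :
    piKronecker M * piKronecker N = piKronecker fun i => M i * N i := by
  ext x y
  simp only [piKronecker, mul_apply, prod_univ_sum, Fintype.piFinset_univ, prod_mul_distrib]

theorem piKronecker_diagonal [∀ i, DecidableEq (κ i)] (d : ∀ i, κ i → R) :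
    piKronecker (fun i => diagonal (d i)) = diagonal fun x => ∏ i, d i (x i) := by
  ext x y
  by_cases h : x = y
  · simp [piKronecker, h]
  · obtain ⟨i, hi⟩ := Function.ne_iff.mp h
    simp only [piKronecker, diagonal_apply_ne _ h]
    exact prod_eq_zero (mem_univ i) (diagonal_apply_ne (d i) hi)

theorem piKronecker_one [∀ i, DecidableEq (κ i)] :
    piKronecker (fun i => (1 : Matrix (κ i) (κ i) R)) = 1 := by
  simpa using piKronecker_diagonal (κ := κ) fun _ _ => (1 : R)

theorem piKronecker_map {S : Type*} [CommSemiring S] (M : ∀ i, Matrix (κ i) (κ i) R)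
    (f : R →+* S) :
    (piKronecker M).map f = piKronecker fun i => (M i).map f := by
  ext x y
  simp [piKronecker]

end PiKronecker

theorem charpoly_eq_of_mul_eq_mul {n R : Type*} [Fintype n] [DecidableEq n] [CommRing R]
    {A B P Q : Matrix n n R} (hPQ : P * Q = 1) (h : A * P = P * B) : A.charpoly = B.charpoly :=
  calc A.charpoly = (P * (B * Q)).charpoly := by
        rw [← Matrix.mul_assoc, ← h, Matrix.mul_assoc, hPQ, Matrix.mul_one]
    _ = (B * Q * P).charpoly := charpoly_mul_comm _ _
    _ = B.charpoly := by rw [Matrix.mul_assoc, mul_eq_one_comm.mp hPQ, Matrix.mul_one]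

end Matrix

section PhiA

theorem PhiA_mulVec_pow {R : Type*} [CommRing R] {m : ℕ} {β : R}
    (hβ : ∑ l ∈ range m, β ^ l = 0) :
    (PhiA m).map (Int.castRingHom R) *ᵥ (fun l => β ^ (l : ℕ))
      = fun l : Fin (m - 1) => β ^ ((l : ℕ) + 1) := by
  ext j
  simp only [mulVec, dotProduct, map_apply, PhiA]
  by_cases hj : (j : ℕ) = m - 2
  · have hβ' : ∑ l : Fin (m - 1), β ^ (l : ℕ) + β ^ (m - 1) = 0 := by
      rwa [Fin.sum_univ_eq_sum_range (fun l => β ^ l), ← sum_range_succ, Nat.sub_add_cancel]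
      omega
    simp only [hj, if_true, map_neg, map_one, neg_one_mul, sum_neg_distrib]
    rw [show m - 2 + 1 = m - 1 by omega]
    linear_combination -hβ'
  · have hj1 : (j : ℕ) + 1 < m - 1 := by omega
    rw [Fintype.sum_eq_single ⟨(j : ℕ) + 1, hj1⟩ fun i hi => by
      simp [hj, Fin.ext_iff.not.mp hi]]
    simp [hj]

variable {K : Type*} [Field K] {ζ : K} {m : ℕ}

theorem PhiA_mul_vandermonde_transpose (hζ : IsPrimitiveRoot ζ m) :
    (PhiA m).map (Int.castRingHom K) * (vandermonde (nontrivialPowers ζ m))ᵀ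
      = (vandermonde (nontrivialPowers ζ m))ᵀ * diagonal (nontrivialPowers ζ m) := by
  ext j k
  have hk : (k : ℕ) + 1 < m := by omega
  have hβ : ∑ l ∈ range m, nontrivialPowers ζ m k ^ l = 0 := by
    have h1 : nontrivialPowers ζ m k ^ m = 1 := by
      rw [nontrivialPowers, ← pow_mul, mul_comm, pow_mul, hζ.pow_eq_one, one_pow]
    have h := geom_sum_mul (nontrivialPowers ζ m k) m
    rw [h1, sub_self] at h
    exact (mul_eq_zero.mp h).resolve_right (sub_ne_zero.mpr (hζ.pow_ne_one_of_pos_of_lt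
      (Nat.succ_ne_zero _) hk))
  have := congrFun (PhiA_mulVec_pow hβ) j
  simp only [mulVec, dotProduct] at this
  rw [mul_diagonal, mul_apply]
  simp only [transpose_apply, vandermonde_apply, map_apply] at this ⊢
  rw [this, pow_succ]

theorem isUnit_det_vandermonde_nontrivialPowers (hζ : IsPrimitiveRoot ζ m) :
    IsUnit (vandermonde (nontrivialPowers ζ m)).det :=
  isUnit_iff_ne_zero.mpr <| det_vandermonde_ne_zero_iff.mpr fun a b h => by
    have := hζ.pow_inj (by omega) (by omega) h
    omega

end PhiA

open MonoidAlgebra in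
theorem map_Chi_eq_rootProd {K : Type*} [Field K] {s : ℕ} (n : Fin s → ℕ) {ζ : Fin s → K}
    (hζ : ∀ i, IsPrimitiveRoot (ζ i) (n i)) :
    (Chi n).map (Int.castRingHom K)
      = rootProd (∏ i, ∑ k, single (nontrivialPowers (ζ i) (n i) k) 1) := by
  set V := fun i => (vandermonde (nontrivialPowers (ζ i) (n i)))ᵀ
  have hV : piKronecker V * piKronecker (fun i => (V i)⁻¹) = 1 := by
    have h : ∀ i, V i * (V i)⁻¹ = 1 := fun i => mul_nonsing_inv _ <| by
      simpa [V] using isUnit_det_vandermonde_nontrivialPowers (hζ i)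
    simp only [piKronecker_mul, h, piKronecker_one]
  rw [prod_univ_sum, Fintype.piFinset_univ, rootProd_sum]
  simp only [prod_single, prod_const_one, rootProd_single]
  rw [Chi, ← charpoly_map, ← charpoly_diagonal, ← piKronecker_diagonal,
    show PhiProd n = piKronecker fun i => PhiA (n i) from rfl, piKronecker_map]
  refine charpoly_eq_of_mul_eq_mul hV ?_
  simp only [piKronecker_mul, V, PhiA_mul_vandermonde_transpose (hζ _)]

open MonoidAlgebra in
theorem chi_formula_general {s : ℕ} (n : Fin s → ℕ) (hn : ∀ i, 2 ≤ n i) :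
    ∏ J ∈ Finset.univ.filter (fun J : Finset (Fin s) => Even (s - J.card)),
        ((X : Polynomial ℤ) ^ (J.lcm n) - 1) ^ ((∏ i ∈ J, n i) / J.lcm n)
      = Chi n *
        ∏ J ∈ Finset.univ.filter (fun J : Finset (Fin s) => ¬ Even (s - J.card)),
          ((X : Polynomial ℤ) ^ (J.lcm n) - 1) ^ ((∏ i ∈ J, n i) / J.lcm n) := by
  have hpos : ∀ i, 0 < n i := fun i => by have := hn i; omega
  have hζ : ∀ i, IsPrimitiveRoot (zeta (n i)) (n i) := fun i => by
    simpa [zeta] using Complex.isPrimitiveRoot_exp (n i) (hpos i).ne'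
  have hJ : ∀ J : Finset (Fin s), ((X : ℂ[X]) ^ J.lcm n - 1) ^ ((∏ i ∈ J, n i) / J.lcm n)
      = rootProd (∏ i ∈ J, powersSum (zeta (n i)) (n i)) := fun J => by
    simpa [← one_def] using (rootProd_single_mul_prod_powersSum hζ hpos J 1).symm
  have hMobius := sum_even_compl_sum_powerset fun K : Finset (Fin s) =>
    ∏ i ∈ K, ∑ k, single (nontrivialPowers (zeta (n i)) (n i) k) 1
  simp only [card_compl, Fintype.card_fin, ← prod_one_add, ← powersSum_eq_one_add _ (hpos _)]
    at hMobius
  apply map_injective (Int.castRingHom ℂ) Int.cast_injective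
  simp only [Polynomial.map_mul, Polynomial.map_prod, Polynomial.map_pow, Polynomial.map_sub,
    Polynomial.map_X, Polynomial.map_one, hJ, map_Chi_eq_rootProd n hζ, ← rootProd_sum,
    ← rootProd_add, hMobius]

theorem chi_formula {s : ℕ} (hs : 0 < s) (n : Fin s → ℕ) (hn : ∀ i, 2 ≤ n i) :
    ∏ J ∈ Finset.univ.filter (fun J : Finset (Fin s) => Even (s - J.card)),
        ((X : Polynomial ℤ) ^ (J.lcm n) - 1) ^ ((∏ i ∈ J, n i) / J.lcm n)
      = Chi n *
        ∏ J ∈ Finset.univ.filter (fun J : Finset (Fin s) => ¬ Even (s - J.card)),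
          ((X : Polynomial ℤ) ^ (J.lcm n) - 1) ^ ((∏ i ∈ J, n i) / J.lcm n) :=
  chi_formula_general n hn
end

section
/- (Corollary 1, first half) Let [n_1,…,n_s] be a multiset of integers ≥ 2 containing the element 2 at most once. Then the multiplicative order of the matrix Φ_{[n_1,…,n_s]} equals n_I := lcm(n_1,…,n_s); that is, Φ_{[n_1,…,n_s]}^{n_I} is the identity and Φ_{[n_1,…,n_s]}^k is not the identity for any 1 ≤ k < n_I. -/
open Matrix Polynomial

lemma phiA_col_sum {n : ℕ} (hn : 2 ≤ n) (j : Fin (n - 1)) :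
    ∑ l, PhiA n l j = if (j : ℕ) = 0 then -1 else 0 := by
  have hsplit : ∀ l : Fin (n - 1), PhiA n l j =
      (if l = (⟨n - 2, by omega⟩ : Fin (n - 1)) then -1 else 0) +
      (if (1 ≤ (j : ℕ) ∧ l = (⟨(j : ℕ) - 1, by have := j.isLt; omega⟩ : Fin (n - 1))) then 1 else 0) := by
    intro l
    have hj := j.isLt
    have hl := l.isLt
    simp only [PhiA, Fin.ext_iff]
    split_ifs <;> omega
  rw [Finset.sum_congr rfl (fun l _ => hsplit l), Finset.sum_add_distrib]
  rw [Finset.sum_ite_eq' Finset.univ]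
  by_cases hj0 : (j : ℕ) = 0
  · simp [hj0]
  · have hj := j.isLt
    have : ∀ l : Fin (n-1), (1 ≤ (j : ℕ) ∧ l = (⟨(j : ℕ) - 1, by omega⟩ : Fin (n - 1)))
        ↔ l = (⟨(j : ℕ) - 1, by omega⟩ : Fin (n - 1)) := by
      intro l; constructor
      · rintro ⟨_, h⟩; exact h
      · intro h; exact ⟨by omega, h⟩
    simp only [this]
    rw [Finset.sum_ite_eq' Finset.univ]
    simp [hj0]

lemma phiA_pow_apply {n : ℕ} (hn : 2 ≤ n) (k : ℕ) (i j : Fin (n - 1)) :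
    ((PhiA n) ^ k) i j =
      if ((i : ℕ) + k) % n = n - 1 then -1
      else if (j : ℕ) = ((i : ℕ) + k) % n then 1 else 0 := by
  induction k generalizing j with
  | zero =>
    have hi := i.isLt
    have h1 : ((i : ℕ) + 0) % n = (i : ℕ) := by
      rw [Nat.add_zero]; exact Nat.mod_eq_of_lt (by omega)
    rw [pow_zero, Matrix.one_apply, h1]
    have h2 : ¬ ((i : ℕ) = n - 1) := by omega
    rw [if_neg h2]
    by_cases h : i = j
    · rw [if_pos h, if_pos (by rw [h])]
    · rw [if_neg h, if_neg (by simpa [Fin.ext_iff, eq_comm] using h)]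
  | succ k ih =>
    rw [pow_succ, Matrix.mul_apply]
    have hn0 : 0 < n := by omega
    have hm : ((i : ℕ) + k) % n < n := Nat.mod_lt _ hn0
    have hmod : ((i : ℕ) + (k + 1)) % n = (((i : ℕ) + k) % n + 1) % n := by
      conv_lhs => rw [← Nat.add_assoc, Nat.add_mod ((i : ℕ) + k) 1 n]
      rw [Nat.mod_eq_of_lt (show 1 < n by omega)]
    rw [hmod]
    by_cases hm1 : ((i : ℕ) + k) % n = n - 1
    · -- row of all -1's
      have hsum : ∀ l : Fin (n - 1), ((PhiA n) ^ k) i l * PhiA n l j = -PhiA n l j := by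
        intro l; rw [ih l, if_pos hm1, neg_one_mul]
      rw [Finset.sum_congr rfl (fun l _ => hsum l), Finset.sum_neg_distrib]
      rw [phiA_col_sum hn j]
      have h0 : (n - 1 + 1) % n = 0 := by
        have : n - 1 + 1 = n := by omega
        rw [this, Nat.mod_self]
      rw [hm1, h0]
      have : ¬ (0 = n - 1) := by omega
      rw [if_neg this]
      split_ifs <;> ring
    · -- single 1 in the row, at column (i+k) % n
      have hlt : ((i : ℕ) + k) % n < n - 1 := by omega
      set a : Fin (n - 1) := ⟨((i : ℕ) + k) % n, hlt⟩ with ha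
      have hsum : ∀ l : Fin (n - 1), ((PhiA n) ^ k) i l * PhiA n l j =
          if l = a then PhiA n l j else 0 := by
        intro l
        rw [ih l, if_neg hm1]
        by_cases h : l = a
        · rw [if_pos h, if_pos (by rw [h]), one_mul]
        · rw [if_neg (by simpa [ha, Fin.ext_iff] using h), if_neg h, zero_mul]
      rw [Finset.sum_congr rfl (fun l _ => hsum l), Finset.sum_ite_eq' Finset.univ]
      rw [if_pos (Finset.mem_univ a)]
      have hstep : (((i : ℕ) + k) % n + 1) % n = ((i : ℕ) + k) % n + 1 :=
        Nat.mod_eq_of_lt (by omega)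
      rw [hstep]
      simp only [PhiA, ha]
      split_ifs <;> omega

lemma phiProd_pow_apply {s : ℕ} (n : Fin s → ℕ) (k : ℕ)
    (x y : (i : Fin s) → Fin (n i - 1)) :
    ((PhiProd n) ^ k) x y = ∏ i, ((PhiA (n i)) ^ k) (x i) (y i) := by
  induction k generalizing y with
  | zero =>
    simp only [pow_zero, Matrix.one_apply]
    by_cases h : x = y
    · subst h; simp
    · rw [if_neg h]
      obtain ⟨i, hi⟩ := Function.ne_iff.mp h
      exact (Finset.prod_eq_zero (Finset.mem_univ i) (by rw [if_neg hi])).symm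
  | succ k ih =>
    rw [pow_succ, Matrix.mul_apply]
    have : ∀ z, ((PhiProd n) ^ k) x z * PhiProd n z y =
        ∏ i, (((PhiA (n i)) ^ k) (x i) (z i) * PhiA (n i) (z i) (y i)) := by
      intro z; rw [ih z, PhiProd, Finset.prod_mul_distrib]
    rw [Finset.sum_congr rfl (fun z _ => this z)]
    rw [show (Finset.univ : Finset ((i : Fin s) → Fin (n i - 1))) =
        Fintype.piFinset (fun _ => Finset.univ) from (Fintype.piFinset_univ).symm]
    have key := Finset.prod_univ_sum (fun i : Fin s => (Finset.univ : Finset (Fin (n i - 1))))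
      (fun i zi => ((PhiA (n i)) ^ k) (x i) zi * PhiA (n i) zi (y i))
    rw [← key]
    exact Finset.prod_congr rfl fun i _ => by rw [pow_succ, Matrix.mul_apply]

lemma phiA_pow_self {m : ℕ} (hm : 2 ≤ m) : (PhiA m) ^ m = 1 := by
  ext i j
  rw [phiA_pow_apply hm m i j, Matrix.one_apply]
  have hi := i.isLt
  have h1 : ((i : ℕ) + m) % m = (i : ℕ) := by
    rw [Nat.add_mod_right]; exact Nat.mod_eq_of_lt (by omega)
  rw [h1, if_neg (by omega : ¬ ((i : ℕ) = m - 1))]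
  by_cases h : i = j
  · rw [if_pos h, if_pos (by rw [h])]
  · rw [if_neg h, if_neg (by simpa [Fin.ext_iff, eq_comm] using h)]

theorem orderOf_phiProd {s : ℕ} (hs : 0 < s) (n : Fin s → ℕ) (hn : ∀ i, 2 ≤ n i)
    (h2 : (Finset.univ.filter (fun i => n i = 2)).card ≤ 1) :
    PhiProd n ^ (Finset.univ.lcm n) = 1 ∧
    ∀ k : ℕ, 1 ≤ k → k < Finset.univ.lcm n → PhiProd n ^ k ≠ 1 := by
  set L := Finset.univ.lcm n with hL
  have hA1 : ∀ i, (PhiA (n i)) ^ L = 1 := by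
    intro i
    obtain ⟨c, hc⟩ := Finset.dvd_lcm (Finset.mem_univ i) (f := n)
    rw [hL, hc, pow_mul, phiA_pow_self (hn i), one_pow]
  constructor
  · have h0 : PhiProd n ^ L = PhiProd n ^ 0 := by
      ext x y
      rw [phiProd_pow_apply, phiProd_pow_apply]
      exact Finset.prod_congr rfl fun i _ => by rw [pow_zero, hA1 i]
    rw [h0, pow_zero]
  · intro k hk1 hkL hEq
    have hnd : ¬ (L ∣ k) := fun h => absurd (Nat.le_of_dvd (by omega) h) (by omega)
    have hex0 : ∃ i0, ¬ (n i0 ∣ k) := by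
      by_contra h
      push_neg at h
      exact hnd (Finset.lcm_dvd fun i _ => h i)
    obtain ⟨i0, hi0⟩ := hex0
    set x0 : (i : Fin s) → Fin (n i - 1) := fun i => ⟨0, by have := hn i; omega⟩ with hx0
    have hval : ∀ (i : Fin s) (y : Fin (n i - 1)), ((PhiA (n i)) ^ k) (x0 i) y =
        if k % n i = n i - 1 then -1 else if (y : ℕ) = k % n i then 1 else 0 := by
      intro i y
      rw [phiA_pow_apply (hn i) k (x0 i) y]
      simp [hx0]
    by_cases hex : ∃ i, 3 ≤ n i ∧ ¬ (n i ∣ k)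
    · obtain ⟨i1, h3, hnd1⟩ := hex
      set y0 : (i : Fin s) → Fin (n i - 1) := fun i =>
        ⟨if k % n i = n i - 1 then (if 3 ≤ n i then 1 else 0) else k % n i, by
          have h2i := hn i
          have hr : k % n i < n i := Nat.mod_lt _ (by omega)
          split_ifs <;> omega⟩ with hy0
      have hne : x0 ≠ y0 := by
        intro h
        have := congrFun h i1
        rw [Fin.ext_iff] at this
        have hr1 : k % n i1 ≠ 0 := fun h0 => hnd1 (Nat.dvd_of_mod_eq_zero h0)
        simp only [hx0, hy0] at this
        split_ifs at this <;> omega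
      have hfac : ∀ i : Fin s, ((PhiA (n i)) ^ k) (x0 i) (y0 i) ≠ 0 := by
        intro i
        rw [hval i (y0 i)]
        by_cases hc : k % n i = n i - 1
        · rw [if_pos hc]; norm_num
        · rw [if_neg hc, if_pos (by simp [hy0, hc])]; norm_num
      have hzero : (PhiProd n ^ k) x0 y0 = 0 := by
        rw [hEq, Matrix.one_apply_ne hne]
      rw [phiProd_pow_apply] at hzero
      exact (Finset.prod_ne_zero_iff.mpr fun i _ => hfac i) hzero
    · push_neg at hex
      have hn2 : ∀ i, ¬ (n i ∣ k) → n i = 2 := by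
        intro i hi
        have := hn i
        by_contra h
        exact hi (hex i (by omega))
      have hdvd : ∀ i, i ≠ i0 → n i ∣ k := by
        intro i hne
        by_contra h
        have hi2 := hn2 i h
        have hi02 := hn2 i0 hi0
        have hsub : ({i, i0} : Finset (Fin s)) ⊆
            Finset.univ.filter (fun j => n j = 2) := by
          intro j hj
          simp only [Finset.mem_insert, Finset.mem_singleton] at hj
          rcases hj with rfl | rfl <;> simp [Finset.mem_filter, hi2, hi02]
        have := Finset.card_le_card hsub
        rw [Finset.card_pair hne] at this
        omega
      have hone : (PhiProd n ^ k) x0 x0 = 1 := by rw [hEq, Matrix.one_apply_eq]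
      rw [phiProd_pow_apply] at hone
      have hprod : ∀ i : Fin s, ((PhiA (n i)) ^ k) (x0 i) (x0 i) =
          if i = i0 then -1 else 1 := by
        intro i
        rw [hval i (x0 i)]
        by_cases hc : i = i0
        · subst hc
          have hi2 := hn2 i hi0
          have : k % n i = 1 := by
            have : k % 2 ≠ 0 := fun h0 => hi0 (by rw [hi2]; exact Nat.dvd_of_mod_eq_zero h0)
            rw [hi2]; omega
          rw [if_pos (by omega), if_pos rfl]
        · obtain ⟨c, hc'⟩ := hdvd i hc
          have h2i := hn i
          have hr : k % n i = 0 := by rw [hc']; exact Nat.mul_mod_right _ _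
          rw [if_neg (by omega), if_pos (by simp [hx0, hr]), if_neg hc]
      rw [Finset.prod_congr rfl (fun i _ => hprod i), Finset.prod_ite_eq' Finset.univ] at hone
      simp at hone
end

section
/- (Corollary 1, second half) Let [n_1,…,n_s] be a multiset of integers ≥ 2 containing the element 2 at most once, and set n_I := lcm(n_1,…,n_s). Then every primitive n_I-th root of unity in ℂ is an eigenvalue of Φ_{[n_1,…,n_s]}, i.e. a root of χ_{[n_1,…,n_s]} in ℂ. -/
open Matrix Polynomial

/-! If `ζ ≠ 1` is an `n`-th root of unity, then `(ζ ^ j)_j` is an eigenvector of `Φ_[n]` with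
eigenvalue `ζ`, so the tensor product of such vectors shows that `∏ ζ_i` is an eigenvalue of
`Φ_{[n_1,…,n_s]}` whenever each `ζ_i` is a nontrivial `n_i`-th root of unity. It remains to write a
primitive `lcm(n_1,…,n_s)`-th root of unity as such a product. Starting from one weight `a` (the
weight `2`, if present) and adding the weights `m ≥ 3` one at a time, this reduces to writing a
primitive `lcm(a,m)`-th root `z` as a primitive `a`-th root times an `m`-th root `ζ ≠ 1`. With
`a = d g`, `m = e g`, `gcd(d,e) = 1`, take `z ^ (e x) * z ^ (d y)` where `e x + d y = 1`, `x` is a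
unit mod `a` (a lift of `e⁻¹` from `ZMod d`) and `m ∤ y`; the last condition can only fail when
`e = 1`, and then `φ(d) < φ(d m)` leaves room to choose the lift `x ≢ 1`.
-/

open Finset
open scoped Nat

lemma Nat.totient_lt_totient_mul {d m : ℕ} (hd : d ≠ 0) (hm : 3 ≤ m) : φ d < φ (d * m) := by
  have hm' : 1 < φ m := by
    have h0 : φ m ≠ 0 := (Nat.totient_pos.2 (by omega)).ne'
    have h1 : φ m ≠ 1 := by rw [Ne, Nat.totient_eq_one_iff]; omega
    omega
  calc φ d < φ d * φ m := lt_mul_of_one_lt_right (Nat.totient_pos.2 (Nat.pos_of_ne_zero hd)) hm'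
    _ ≤ φ (d * m) := Nat.totient_super_multiplicative d m

lemma ZMod.exists_ne_one_unitsMap_eq_one {d m : ℕ} (hd : d ≠ 0) (hm : 3 ≤ m) :
    ∃ u : (ZMod (d * m))ˣ, u ≠ 1 ∧ ZMod.unitsMap (dvd_mul_right d m) u = 1 := by
  have : NeZero d := ⟨hd⟩
  have : NeZero (d * m) := ⟨by positivity⟩
  have hinj : ¬ Function.Injective (ZMod.unitsMap (dvd_mul_right d m)) := fun hinj => by
    have := Fintype.card_le_of_injective _ hinj
    rw [ZMod.card_units_eq_totient, ZMod.card_units_eq_totient] at this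
    exact (Nat.totient_lt_totient_mul hd hm).not_ge this
  simpa [injective_iff_map_eq_one, and_comm] using hinj

lemma Nat.Coprime.exists_mul_add_mul_eq_one {d e g : ℕ} (hde : e.Coprime d) (hd : d ≠ 0)
    (hm : 3 ≤ e * g) :
    ∃ x y : ℤ, e * x + d * y = 1 ∧ IsCoprime x (d * g : ℕ) ∧ ¬ ((e * g : ℕ) : ℤ) ∣ y := by
  have hg : g ≠ 0 := by rintro rfl; simp at hm
  have : NeZero (d * g) := ⟨mul_ne_zero hd hg⟩
  obtain ⟨X, hX, hX1⟩ : ∃ X : (ZMod (d * g))ˣ,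
      ZMod.unitsMap (Nat.dvd_mul_right d g) X = (ZMod.unitOfCoprime e hde)⁻¹ ∧ (e = 1 → X ≠ 1) := by
    by_cases he : e = 1
    · subst he
      obtain ⟨u, hu1, hu⟩ := ZMod.exists_ne_one_unitsMap_eq_one hd (by simpa using hm)
      exact ⟨u, by rw [hu, eq_comm, inv_eq_one]; ext; simp, fun _ => hu1⟩
    · obtain ⟨X, hX⟩ := ZMod.unitsMap_surjective (Nat.dvd_mul_right d g) (ZMod.unitOfCoprime e hde)⁻¹
      exact ⟨X, hX, fun h => absurd h he⟩
  set x : ℤ := ((X : ZMod (d * g)).val : ℤ)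
  have hxX : (x : ZMod (d * g)) = X := by simp [x]
  obtain ⟨t, ht⟩ : (d : ℤ) ∣ e * x - 1 := by
    have hx : (x : ZMod d) = ((ZMod.unitOfCoprime e hde)⁻¹ : (ZMod d)ˣ) := by
      rw [← hX, ZMod.unitsMap_val]; simp [x, ZMod.natCast_val]
    rw [← ZMod.intCast_zmod_eq_zero_iff_dvd]
    push_cast
    rw [hx, ← ZMod.coe_unitOfCoprime e hde, Units.mul_inv, sub_self]
  refine ⟨x, -t, by linarith, Nat.isCoprime_iff_coprime.2 (ZMod.val_coe_unit_coprime X), ?_⟩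
  rintro ⟨k, hk⟩
  push_cast at hk
  have he : e = 1 := by
    have : (e : ℤ) ∣ 1 := ⟨x + d * g * k, by linear_combination -ht + d * hk⟩
    exact_mod_cast Int.eq_one_of_dvd_one (by positivity) this
  subst he
  refine hX1 rfl (Units.val_eq_one.1 ?_)
  rw [← hxX, ← Int.cast_one, ZMod.intCast_eq_intCast_iff_dvd_sub]
  exact ⟨k, by push_cast; linear_combination -ht + d * hk⟩

theorem IsPrimitiveRoot.exists_mul_eq_of_lcm {M : Type*} [CommMonoid M] {z : M} {a m : ℕ}
    (ha : a ≠ 0) (hm : 3 ≤ m) (hz : IsPrimitiveRoot z (Nat.lcm a m)) :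
    ∃ w ζ : M, IsPrimitiveRoot w a ∧ ζ ^ m = 1 ∧ ζ ≠ 1 ∧ w * ζ = z := by
  obtain ⟨d, e, hde, had, hme⟩ := Nat.exists_coprime a m
  set g := a.gcd m
  have hN : Nat.lcm a m = d * e * g := by rw [had, hme, Nat.lcm_mul_right, hde.lcm_eq_mul]
  have hd : d ≠ 0 := by rintro rfl; simp [ha] at had
  obtain ⟨x, y, hxy, hx, hy⟩ := hde.symm.exists_mul_add_mul_eq_one hd (hme ▸ hm)
  have hN0 : Nat.lcm a m ≠ 0 := Nat.lcm_ne_zero ha (by omega)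
  lift z to Mˣ using hz.isUnit hN0
  rw [IsPrimitiveRoot.coe_units_iff, hN] at hz
  rw [hN] at hN0
  refine ⟨↑(z ^ ((e : ℤ) * x)), ↑(z ^ ((d : ℤ) * y)), ?_, ?_, ?_, ?_⟩
  · have hze : IsPrimitiveRoot (z ^ e) a := hz.pow (Nat.pos_of_ne_zero hN0) (by rw [had]; ring)
    rw [IsPrimitiveRoot.coe_units_iff, _root_.zpow_mul, zpow_natCast]
    exact hze.zpow_of_gcd_eq_one x (Int.isCoprime_iff_gcd_eq_one.1 (had ▸ hx))
  · rw [← Units.val_pow_eq_pow_val, ← zpow_natCast, ← _root_.zpow_mul, (hz.zpow_eq_one_iff_dvd _).2,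
      Units.val_one]
    exact ⟨y, by rw [hme]; push_cast; ring⟩
  · rw [Ne, Units.val_eq_one, hz.zpow_eq_one_iff_dvd]
    refine fun h => hy ?_
    push_cast at h ⊢
    exact (mul_dvd_mul_iff_left (by positivity : (d : ℤ) ≠ 0)).1 (by simpa [mul_assoc] using h)
  · rw [← Units.val_mul, ← _root_.zpow_add, hxy, zpow_one]

theorem IsPrimitiveRoot.exists_eq_mul_prod {M ι : Type*} [CommMonoid M] (n : ι → ℕ) {a : ℕ}
    (ha : a ≠ 0) (S : Finset ι) (hS : ∀ i ∈ S, 3 ≤ n i) {z : M}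
    (hz : IsPrimitiveRoot z (lcm a (S.lcm n))) :
    ∃ (w : M) (ζ : ι → M), IsPrimitiveRoot w a ∧ (∀ i ∈ S, ζ i ^ n i = 1 ∧ ζ i ≠ 1) ∧
      z = w * ∏ i ∈ S, ζ i := by
  classical
  induction S using Finset.induction_on generalizing z with
  | empty => exact ⟨z, 1, by simpa using hz, by simp, by simp⟩
  | @insert j S hj ih =>
    have hSn : S.lcm n ≠ 0 := by
      rw [Ne, Finset.lcm_eq_zero_iff]
      rintro ⟨i, hi, hi0⟩
      have := hS i (mem_insert_of_mem hi)
      omega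
    rw [lcm_insert, lcm_comm (n j), ← lcm_assoc, lcm_eq_nat_lcm] at hz
    obtain ⟨w', ζj, hw', hζj, hζj1, rfl⟩ :=
      hz.exists_mul_eq_of_lcm (Nat.lcm_ne_zero ha hSn) (hS j (mem_insert_self j S))
    obtain ⟨w, ζ, hw, hζ, rfl⟩ := ih (fun i hi => hS i (mem_insert_of_mem hi)) hw'
    refine ⟨w, Function.update ζ j ζj, hw, ?_, ?_⟩
    · intro i hi
      rcases eq_or_ne i j with rfl | hij
      · simpa using ⟨hζj, hζj1⟩
      · simpa [hij] using hζ i ((mem_insert.1 hi).resolve_left hij)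
    · rw [prod_insert hj, prod_update_of_notMem hj, Function.update_self]
      ac_rfl

theorem IsPrimitiveRoot.exists_prod_eq {M ι : Type*} [CommMonoid M] [Fintype ι] [Nonempty ι]
    (n : ι → ℕ) (hn : ∀ i, 2 ≤ n i) (h2 : (univ.filter (fun i => n i = 2)).card ≤ 1) {z : M}
    (hz : IsPrimitiveRoot z (univ.lcm n)) :
    ∃ ζ : ι → M, (∀ i, ζ i ^ n i = 1 ∧ ζ i ≠ 1) ∧ ∏ i, ζ i = z := by
  classical
  obtain ⟨i₀, hi₀⟩ : ∃ i₀, ∀ i ≠ i₀, 3 ≤ n i := by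
    by_cases h : ∃ i₀, n i₀ = 2
    · obtain ⟨i₀, hi₀⟩ := h
      refine ⟨i₀, fun i hi => ?_⟩
      by_contra hlt
      have hi2 : n i = 2 := by have := hn i; omega
      exact hi (card_le_one.1 h2 i (by simp [hi2]) i₀ (by simp [hi₀]))
    · push Not at h
      exact ⟨Classical.arbitrary ι, fun i _ => by have := hn i; have := h i; omega⟩
  rw [← insert_erase (mem_univ i₀), lcm_insert] at hz
  obtain ⟨w, ζ, hw, hζ, rfl⟩ := hz.exists_eq_mul_prod n (by have := hn i₀; omega)
    (univ.erase i₀) (fun i hi => hi₀ i (ne_of_mem_erase hi))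
  refine ⟨Function.update ζ i₀ w, fun i => ?_, ?_⟩
  · rcases eq_or_ne i i₀ with rfl | hi
    · simpa using ⟨hw.pow_eq_one, hw.ne_one (hn i)⟩
    · simpa [hi] using hζ i (mem_erase.2 ⟨hi, mem_univ i⟩)
  · rw [← mul_prod_erase univ _ (mem_univ i₀), Function.update_self,
      prod_update_of_notMem (notMem_erase i₀ univ)]

theorem Matrix.isRoot_charpoly_of_mulVec_eq_smul {R n : Type*} [CommRing R] [IsDomain R]
    [Fintype n] [DecidableEq n] {A : Matrix n n R} {v : n → R} {μ : R} (hv : v ≠ 0)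
    (h : A *ᵥ v = μ • v) : A.charpoly.IsRoot μ := by
  rw [← Matrix.charpoly_toLin', ← Module.End.hasEigenvalue_iff_isRoot_charpoly]
  exact Module.End.hasEigenvalue_of_hasEigenvector
    ⟨Module.End.mem_eigenspace_iff.2 (by simpa using h), hv⟩

theorem Matrix.piKronecker_mulVec_eq_smul {R ι : Type*} [CommRing R] [Fintype ι] [DecidableEq ι]
    {κ : ι → Type*} [∀ i, Fintype (κ i)] (A : ∀ i, Matrix (κ i) (κ i) R) (v : ∀ i, κ i → R)
    (μ : ι → R) (h : ∀ i, A i *ᵥ v i = μ i • v i) :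
    (of fun x y : (∀ i, κ i) => ∏ i, A i (x i) (y i)) *ᵥ (fun x => ∏ i, v i (x i)) =
      (∏ i, μ i) • fun x => ∏ i, v i (x i) := by
  ext x
  calc ∑ y : ∀ i, κ i, (∏ i, A i (x i) (y i)) * ∏ i, v i (y i)
      = ∏ i, ∑ j, A i (x i) j * v i j := by simp_rw [← prod_mul_distrib, Fintype.prod_sum]
    _ = ∏ i, μ i * v i (x i) := prod_congr rfl fun i _ => congrFun (h i) (x i)
    _ = (∏ i, μ i) * ∏ i, v i (x i) := prod_mul_distrib

theorem PhiA_map_mulVec_pow {R : Type*} [CommRing R] [IsDomain R] {n : ℕ} {ζ : R}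
    (hζn : ζ ^ n = 1) (hζ1 : ζ ≠ 1) :
    (PhiA n).map (Int.castRingHom R) *ᵥ (fun j : Fin (n - 1) => ζ ^ (j : ℕ)) =
      ζ • fun j : Fin (n - 1) => ζ ^ (j : ℕ) := by
  ext x
  by_cases hx : (x : ℕ) = n - 2
  · have hgeom : ∑ j ∈ range n, ζ ^ j = 0 := by
      have := geom_sum_mul ζ n
      rw [hζn, sub_self] at this
      exact (mul_eq_zero.1 this).resolve_right (sub_ne_zero.2 hζ1)
    rw [show n = n - 2 + 1 + 1 by omega, sum_range_succ] at hgeom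
    simp only [mulVec, dotProduct, map_apply, PhiA, hx, if_true, Pi.smul_apply, smul_eq_mul,
      Int.coe_castRingHom, Int.cast_neg, Int.cast_one, neg_one_mul, sum_neg_distrib,
      Fin.sum_univ_eq_sum_range (fun j => ζ ^ j), show n - 1 = n - 2 + 1 by omega]
    linear_combination -hgeom
  · have hx1 : (x : ℕ) + 1 < n - 1 := by omega
    simp only [mulVec, dotProduct, map_apply, PhiA, hx, if_false, Pi.smul_apply, smul_eq_mul]
    rw [sum_eq_single ⟨(x : ℕ) + 1, hx1⟩ (fun j _ hj => by
      rw [if_neg fun h => hj (Fin.ext h), map_zero, zero_mul])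
      (by simp)]
    simp [pow_succ']

theorem primitiveRoot_isRoot_chi {s : ℕ} (hs : 0 < s) (n : Fin s → ℕ) (hn : ∀ i, 2 ≤ n i)
    (h2 : (Finset.univ.filter (fun i => n i = 2)).card ≤ 1) :
    ∀ z : ℂ, IsPrimitiveRoot z (Finset.univ.lcm n) →
      ((Chi n).map (Int.castRingHom ℂ)).IsRoot z := by
  intro z hz
  have : Nonempty (Fin s) := Fin.pos_iff_nonempty.1 hs
  obtain ⟨ζ, hζ, rfl⟩ := hz.exists_prod_eq n hn h2
  have hPhi : (PhiProd n).map (Int.castRingHom ℂ) =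
      of fun x y => ∏ i, (PhiA (n i)).map (Int.castRingHom ℂ) (x i) (y i) := by
    ext x y
    simp [PhiProd]
  rw [Chi, ← charpoly_map, hPhi]
  refine isRoot_charpoly_of_mulVec_eq_smul ?_ (piKronecker_mulVec_eq_smul _ _ ζ
    fun i => PhiA_map_mulVec_pow (hζ i).1 (hζ i).2)
  exact Function.ne_iff.2 ⟨fun i => ⟨0, by have := hn i; omega⟩, by simp⟩
end

section
/- Let p be a prime, e ∈ ℕ, and let e_1,…,e_s ∈ ℕ be such that e_i < e for all i ∈ {1,…,s'} and e_i = e for all i ∈ {s'+1,…,s}, for some 0 ≤ s' ≤ s−1. Then ∑_{J ⊆ {1,…,s}, max_{i∈J} e_i = e} ∏_{i∈J} (−p^{e_i}) = (∏_{i=1}^{s'} (1 − p^{e_i})) · ((1 − p^e)^{s−s'} − 1), where the sum runs over nonempty subsets J containing at least one index from {s'+1,…,s}. In particular this quantity is nonzero, except when p^e = 2 and s − s' = s is even. -/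
open Matrix Polynomial

/-!
Expanding `∏ i, (1 + f i)` over all subsets and removing the subsets that avoid the indices
`i ≥ s'` gives the identity. Its first factor is nonzero since every `p ^ E i ≥ 2`, and
`(1 - p ^ e) ^ k = 1` forces `1 - p ^ e = -1` with `k` even, i.e. `p ^ e = 2`. Then `e = 1`,
so no index has `0 < E i < e`, i.e. `s' = 0`.
-/

open Finset

/- The decidability of `∃ i ∈ J, P i` is a separate argument so that the lemma applies whatever
instance the caller's filter uses (for `ι = Fin s` it is `Nat.decidableExistsFin`). -/
theorem Finset.sum_filter_exists_mem_prod {ι R : Type*} [Fintype ι] [CommRing R]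
    (P : ι → Prop) [DecidablePred P] [DecidablePred fun J : Finset ι => ∃ i ∈ J, P i]
    (f : ι → R) :
    ∑ J ∈ univ.filter (fun J : Finset ι => ∃ i ∈ J, P i), ∏ i ∈ J, f i
      = (∏ i ∈ univ.filter (fun i => ¬ P i), (1 + f i))
        * ((∏ i ∈ univ.filter P, (1 + f i)) - 1) := by
  have h_all : ∑ J : Finset ι, ∏ i ∈ J, f i
      = (∏ i ∈ univ.filter (fun i => ¬ P i), (1 + f i)) * ∏ i ∈ univ.filter P, (1 + f i) := by
    rw [prod_filter_not_mul_prod_filter, prod_one_add, powerset_univ]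
  have h_avoid : univ.filter (fun J : Finset ι => ¬ ∃ i ∈ J, P i)
      = (univ.filter (fun i => ¬ P i)).powerset := by
    ext J
    simp [subset_iff]
  have h_split := sum_filter_add_sum_filter_not univ (fun J : Finset ι => ∃ i ∈ J, P i)
    (fun J => ∏ i ∈ J, f i)
  rw [h_avoid, ← prod_one_add, h_all] at h_split
  linear_combination h_split

theorem one_sub_pow_eq_one_iff {R : Type*} [Ring R] [LinearOrder R] [IsStrictOrderedRing R]
    {q : R} (hq : 2 ≤ q) {k : ℕ} (hk : k ≠ 0) :
    (1 - q) ^ k = 1 ↔ q = 2 ∧ Even k := by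
  rw [pow_eq_one_iff_of_ne_zero hk]
  have hq0 : q ≠ 0 := by positivity
  constructor
  · rintro (h | ⟨h, hk⟩)
    · exact absurd (sub_eq_self.mp h) hq0
    · refine ⟨?_, hk⟩
      calc q = 1 - (1 - q) := (sub_sub_cancel 1 q).symm
        _ = 2 := by rw [h]; norm_num
  · rintro ⟨rfl, hk⟩
    exact Or.inr ⟨by norm_num, hk⟩

theorem Fin.card_filter_le_val {n m : ℕ} : #{i : Fin n | m ≤ i} = n - m := by
  have := card_filter_add_card_filter_not (s := univ) (fun i : Fin n => m ≤ i)
  simp only [not_le, Fin.card_filter_val_lt, card_univ, Fintype.card_fin] at this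
  omega

theorem prime_power_sum_identity_general (p : ℕ) (hp : p.Prime) (e : ℕ)
    {s : ℕ} (s' : ℕ) (hs' : s' < s)
    (E : Fin s → ℕ) (hE : ∀ i, 0 < E i)
    (hlt : ∀ i : Fin s, (i : ℕ) < s' → E i < e)
    (heq : ∀ i : Fin s, s' ≤ (i : ℕ) → E i = e) :
    (∑ J ∈ Finset.univ.filter (fun J : Finset (Fin s) => ∃ i ∈ J, s' ≤ (i : ℕ)),
        ∏ i ∈ J, (-(p : ℤ) ^ (E i)))
      = (∏ i ∈ Finset.univ.filter (fun i : Fin s => (i : ℕ) < s'),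
          (1 - (p : ℤ) ^ (E i)))
        * ((1 - (p : ℤ) ^ e) ^ (s - s') - 1) ∧
    ((∑ J ∈ Finset.univ.filter (fun J : Finset (Fin s) => ∃ i ∈ J, s' ≤ (i : ℕ)),
        ∏ i ∈ J, (-(p : ℤ) ^ (E i))) ≠ 0
      ↔ ¬ (p ^ e = 2 ∧ s' = 0 ∧ Even s)) := by
  have hp2 : (2 : ℤ) ≤ p := by exact_mod_cast hp.two_le
  have two_le_pow {k : ℕ} (hk : k ≠ 0) : (2 : ℤ) ≤ (p : ℤ) ^ k :=
    hp2.trans (le_self_pow₀ (by linarith) hk)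
  have he : e ≠ 0 := heq ⟨s', hs'⟩ le_rfl ▸ (hE _).ne'
  have h_tail : ∏ i ∈ univ.filter (fun i : Fin s => s' ≤ (i : ℕ)), (1 - (p : ℤ) ^ E i)
      = (1 - (p : ℤ) ^ e) ^ (s - s') := by
    rw [prod_eq_pow_card fun i hi => by rw [heq i (mem_filter.mp hi).2], Fin.card_filter_le_val]
  have h_sum := sum_filter_exists_mem_prod (fun i : Fin s => s' ≤ (i : ℕ))
    (fun i => -(p : ℤ) ^ E i)
  simp only [← sub_eq_add_neg, h_tail] at h_sum
  rw [filter_congr fun i _ => not_le] at h_sum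
  refine ⟨h_sum, ?_⟩
  have h_head : ∏ i ∈ univ.filter (fun i : Fin s => (i : ℕ) < s'), (1 - (p : ℤ) ^ E i) ≠ 0 :=
    prod_ne_zero_iff.mpr fun i _ => by linarith [two_le_pow (hE i).ne']
  have h_s' : p ^ e = 2 → s' = 0 := by
    intro h2
    obtain ⟨-, rfl⟩ := (Nat.prime_two.pow_eq_iff).mp h2
    by_contra hs0
    have := hlt ⟨0, by omega⟩ (Nat.pos_of_ne_zero hs0)
    have := hE ⟨0, by omega⟩
    omega
  rw [h_sum, mul_ne_zero_iff_left h_head, sub_ne_zero, ne_eq,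
    one_sub_pow_eq_one_iff (two_le_pow he) (by omega)]
  norm_cast
  exact not_congr ⟨fun ⟨h2, hev⟩ => ⟨h2, h_s' h2, by simpa [h_s' h2] using hev⟩,
    fun ⟨h2, hs0, hev⟩ => ⟨h2, by simpa [hs0] using hev⟩⟩

theorem prime_power_sum_identity (p : ℕ) (hp : p.Prime) (e : ℕ) (he : 0 < e)
    {s : ℕ} (s' : ℕ) (hs' : s' < s)
    (E : Fin s → ℕ) (hE : ∀ i, 0 < E i)
    (hlt : ∀ i : Fin s, (i : ℕ) < s' → E i < e)
    (heq : ∀ i : Fin s, s' ≤ (i : ℕ) → E i = e) :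
    (∑ J ∈ Finset.univ.filter (fun J : Finset (Fin s) => ∃ i ∈ J, s' ≤ (i : ℕ)),
        ∏ i ∈ J, (-(p : ℤ) ^ (E i)))
      = (∏ i ∈ Finset.univ.filter (fun i : Fin s => (i : ℕ) < s'),
          (1 - (p : ℤ) ^ (E i)))
        * ((1 - (p : ℤ) ^ e) ^ (s - s') - 1) ∧
    ((∑ J ∈ Finset.univ.filter (fun J : Finset (Fin s) => ∃ i ∈ J, s' ≤ (i : ℕ)),
        ∏ i ∈ J, (-(p : ℤ) ^ (E i))) ≠ 0
      ↔ ¬ (p ^ e = 2 ∧ s' = 0 ∧ Even s)) :=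
  prime_power_sum_identity_general p hp e s' hs' E hE hlt heq
end

section
/- Let p be a prime and let the weights be n_i = p^{e_i} for i = 1,…,s with e_i ∈ ℕ, and set e := max(e_1,…,e_s). Then exp(2π√(−1)/p^e) is an eigenvalue of Φ_{[n_1,…,n_s]} (i.e. a root of χ_{[n_1,…,n_s]} in ℂ) if and only if it is not the case that p^e = 2 and s is even. -/
open Matrix Polynomial

/-!
For every `n`-th root of unity `μ ≠ 1` the vector `k ↦ μ^k` is an eigenvector of `Φ_[n]` with
eigenvalue `μ` (the last row of `Φ_[n]` turns `1 + μ + ⋯ + μ^(n-1) = 0` into `μ^(n-1)`), so by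
tensoring such vectors every product `∏ μ_i` of nontrivial `n_i`-th roots of unity is an
eigenvalue of `Φ_{[n_1,…,n_s]}`.

Let `n_{i₀} = p^e` be a largest weight and `ζ = exp(2π√-1/p^e)`. If the other factors `μ_i` can be
chosen with `∏_{i ≠ i₀} μ_i ≠ ζ`, then `μ_{i₀} := ζ / ∏_{i ≠ i₀} μ_i` is a nontrivial `p^e`-th root
of unity and `ζ = ∏ μ_i`. Such a choice exists unless every other weight is `2` and
`ζ = (-1)^(s-1)`, which happens exactly when `p^e = 2` and `s` is even. In that case `Φ` is the
`1 × 1` matrix `((-1)^s) = (1)`, which does not have the eigenvalue `ζ = -1`.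
-/

open Finset

section Eigenvectors

variable {R : Type*} [CommRing R]

theorem PhiA_sum_mul_pow {n : ℕ} {μ : R} (hμ : ∑ k ∈ range n, μ ^ k = 0)
    (i : Fin (n - 1)) :
    ∑ k, (PhiA n i k : R) * μ ^ (k : ℕ) = μ ^ ((i : ℕ) + 1) := by
  have hi := i.isLt
  by_cases hlast : (i : ℕ) = n - 2
  · have hgeom : ∑ k ∈ range (n - 1), μ ^ k + μ ^ ((i : ℕ) + 1) = 0 := by
      rw [show (i : ℕ) + 1 = n - 1 by omega, ← sum_range_succ,
        Nat.sub_add_cancel (by omega), hμ]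
    simp only [PhiA, hlast, if_true, Int.cast_neg, Int.cast_one, neg_one_mul, sum_neg_distrib,
      Fin.sum_univ_eq_sum_range (fun k => μ ^ k)]
    rw [hlast] at hgeom
    linear_combination -hgeom
  · rw [sum_eq_single ⟨(i : ℕ) + 1, by omega⟩]
    · simp [PhiA, hlast]
    · intro k _ hk
      have hk' : (k : ℕ) ≠ i + 1 := fun h => hk (Fin.ext h)
      simp [PhiA, hlast, hk']
    · simp

theorem PhiProd_mulVec_prod_pow {s : ℕ} {n : Fin s → ℕ} {μ : Fin s → R}
    (hμ : ∀ i, ∑ k ∈ range (n i), μ i ^ k = 0) :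
    (PhiProd n).map (Int.castRingHom R) *ᵥ (fun x => ∏ i, μ i ^ (x i : ℕ)) =
      (∏ i, μ i) • fun x => ∏ i, μ i ^ (x i : ℕ) := by
  ext x
  calc _ = ∏ i, ∑ k, (PhiA (n i) (x i) k : R) * μ i ^ (k : ℕ) := by
        rw [Fintype.prod_sum]
        simp [mulVec, dotProduct, PhiProd, prod_mul_distrib]
    _ = ∏ i, μ i ^ ((x i : ℕ) + 1) := by simp_rw [PhiA_sum_mul_pow (hμ _)]
    _ = _ := by simp [pow_succ, prod_mul_distrib, mul_comm]

theorem isRoot_Chi_prod [IsDomain R] {s : ℕ} {n : Fin s → ℕ} (hn : ∀ i, 2 ≤ n i)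
    {μ : Fin s → R} (hμ : ∀ i, μ i ^ n i = 1 ∧ μ i ≠ 1) :
    ((Chi n).map (Int.castRingHom R)).IsRoot (∏ i, μ i) := by
  have hgeom : ∀ i, ∑ k ∈ range (n i), μ i ^ k = 0 := fun i => by
    have := geom_sum_mul (μ i) (n i)
    rw [(hμ i).1, sub_self, mul_eq_zero, sub_eq_zero] at this
    exact this.resolve_right (hμ i).2
  rw [Chi, ← charpoly_map, ← charpoly_toLin', ← Module.End.hasEigenvalue_iff_isRoot_charpoly]
  refine Module.End.hasEigenvalue_of_hasEigenvector (x := fun x => ∏ i, μ i ^ (x i : ℕ))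
    ⟨Module.End.mem_eigenspace_iff.2 ?_, fun h0 => ?_⟩
  · rw [toLin'_apply, PhiProd_mulVec_prod_pow hgeom]
  · simpa using congr_fun h0 fun i => ⟨0, by have := hn i; omega⟩

end Eigenvectors

theorem Chi_const_two (s : ℕ) : Chi (fun _ : Fin s => 2) = X - C ((-1) ^ s) := by
  have : Unique ((i : Fin s) → Fin (2 - 1)) := inferInstanceAs (Unique (Fin s → Fin 1))
  rw [Chi, charpoly, det_unique, charmatrix_apply_eq]
  simp [PhiProd, PhiA]

theorem isPrimitiveRoot_zeta {m : ℕ} (hm : m ≠ 0) : IsPrimitiveRoot (zeta m) m :=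
  Complex.isPrimitiveRoot_exp m hm

theorem zeta_two : zeta 2 = -1 :=
  (isPrimitiveRoot_zeta two_ne_zero).eq_neg_one_of_two_right

theorem exists_rootsOfUnity_prod_ne {t : ℕ} {m : Fin t → ℕ} (hm : ∀ j, 2 ≤ m j) {z : ℂ}
    (hz : (∀ j, m j = 2) → z ≠ (-1) ^ t) :
    ∃ ν : Fin t → ℂ, (∀ j, ν j ^ m j = 1 ∧ ν j ≠ 1) ∧ ∏ j, ν j ≠ z := by
  by_cases hall : ∀ j, m j = 2
  · exact ⟨fun _ => -1, fun j => ⟨by simp [hall j], by norm_num⟩, by simpa using (hz hall).symm⟩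
  obtain ⟨j₁, hj₁⟩ := not_forall.1 hall
  have hω : ∀ j, IsPrimitiveRoot (zeta (m j)) (m j) :=
    fun j => isPrimitiveRoot_zeta (by have := hm j; omega)
  have hω₁ : zeta (m j₁) ^ 2 ≠ 1 := fun h => by
    have := Nat.le_of_dvd two_pos ((hω j₁).pow_eq_one_iff_dvd 2 |>.1 h)
    have := hm j₁
    omega
  -- Multiplying the `j₁`-th factor by `zeta (m j₁) ≠ 1` changes the product.
  set ν' : Fin t → ℂ := fun j => zeta (m j) * (Pi.mulSingle j₁ (zeta (m j₁)) : Fin t → ℂ) j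
  have hν' : ∏ j, ν' j = (∏ j, zeta (m j)) * zeta (m j₁) := by
    simp [ν', prod_mul_distrib, prod_pi_mulSingle']
  by_cases hz' : ∏ j, zeta (m j) = z
  · refine ⟨ν', fun j => ?_, ?_⟩
    · rcases eq_or_ne j j₁ with rfl | hj
      · simp only [ν', Pi.mulSingle_eq_same, ← sq]
        exact ⟨by rw [← pow_mul, mul_comm, pow_mul, (hω j).pow_eq_one, one_pow], hω₁⟩
      · simp only [ν', Pi.mulSingle_eq_of_ne hj, mul_one]
        exact ⟨(hω j).pow_eq_one, (hω j).ne_one (hm j)⟩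
    · rw [hν', hz', Ne, mul_eq_left₀ (hz' ▸ prod_ne_zero_iff.2 fun j _ => (hω j).ne_zero
        (by have := hm j; omega))]
      exact (hω j₁).ne_one (hm j₁)
  · exact ⟨fun j => zeta (m j), fun j => ⟨(hω j).pow_eq_one, (hω j).ne_one (hm j)⟩, hz'⟩

theorem exists_rootsOfUnity_prod_eq {t : ℕ} {n : Fin (t + 1) → ℕ} (hn : ∀ i, 2 ≤ n i)
    {i₀ : Fin (t + 1)} (hdvd : ∀ i, n i ∣ n i₀) {z : ℂ} (hz : z ^ n i₀ = 1)
    (hz' : (∀ j, n (i₀.succAbove j) = 2) → z ≠ (-1) ^ t) :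
    ∃ μ : Fin (t + 1) → ℂ, (∀ i, μ i ^ n i = 1 ∧ μ i ≠ 1) ∧ ∏ i, μ i = z := by
  obtain ⟨ν, hν, hνz⟩ := exists_rootsOfUnity_prod_ne (fun j => hn (i₀.succAbove j)) hz'
  have hP : (∏ j, ν j) ^ n i₀ = 1 := by
    rw [← prod_pow]
    refine prod_eq_one fun j _ => ?_
    obtain ⟨k, hk⟩ := hdvd (i₀.succAbove j)
    rw [hk, pow_mul, (hν j).1, one_pow]
  have hP0 : ∏ j, ν j ≠ 0 := fun h => by
    rw [h, zero_pow (by have := hn i₀; omega)] at hP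
    exact zero_ne_one hP
  refine ⟨Fin.insertNth i₀ (z / ∏ j, ν j) ν, (Fin.forall_iff_succAbove i₀).2 ⟨?_, ?_⟩, ?_⟩
  · rw [Fin.insertNth_apply_same, div_pow, hz, hP, div_one, Ne, div_eq_one_iff_eq hP0]
    exact ⟨rfl, fun h => hνz h.symm⟩
  · simpa using hν
  · rw [Fin.prod_univ_succAbove _ i₀]
    simp [div_mul_cancel₀ _ hP0]

theorem zeta_max_isRoot_iff (p : ℕ) (hp : p.Prime) {s : ℕ} (hs : 0 < s)
    (e : Fin s → ℕ) (he : ∀ i, 0 < e i) :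
    ((Chi (fun i => p ^ e i)).map (Int.castRingHom ℂ)).IsRoot
        (zeta (p ^ (Finset.univ.sup e)))
      ↔ ¬ (p ^ (Finset.univ.sup e) = 2 ∧ Even s) := by
  obtain ⟨t, rfl⟩ : ∃ t, s = t + 1 := ⟨s - 1, by omega⟩
  obtain ⟨i₀, -, hi₀⟩ := exists_mem_eq_sup univ univ_nonempty e
  rw [hi₀]
  have hpow : ∀ i, 2 ≤ p ^ e i := fun i => hp.two_le.trans (Nat.le_self_pow (he i).ne' p)
  have hdvd : ∀ i, p ^ e i ∣ p ^ e i₀ := fun i => pow_dvd_pow p (hi₀ ▸ le_sup (mem_univ i))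
  have hζ := isPrimitiveRoot_zeta (pow_ne_zero (e i₀) hp.ne_zero)
  constructor
  · rintro hroot ⟨h2, hev⟩
    have hn : (fun i => p ^ e i) = fun _ => 2 :=
      funext fun i => le_antisymm (Nat.le_of_dvd two_pos (h2 ▸ hdvd i)) (hpow i)
    rw [hn, Chi_const_two, h2, zeta_two] at hroot
    norm_num [hev.neg_one_pow] at hroot
  · intro h
    have hζ_ne : zeta (p ^ e i₀) ≠ (-1) ^ t := by
      intro heq
      have hsq : zeta (p ^ e i₀) ^ 2 = 1 := by
        rw [heq, ← pow_mul, mul_comm, pow_mul, neg_one_sq, one_pow]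
      have h2 : p ^ e i₀ = 2 :=
        le_antisymm (Nat.le_of_dvd two_pos ((hζ.pow_eq_one_iff_dvd 2).1 hsq)) (hpow i₀)
      rw [h2, zeta_two, eq_comm, neg_one_pow_eq_neg_one_iff_odd (by norm_num)] at heq
      exact h ⟨h2, heq.add_one⟩
    obtain ⟨μ, hμ, hprod⟩ :=
      exists_rootsOfUnity_prod_eq hpow hdvd hζ.pow_eq_one fun _ => hζ_ne
    rw [← hprod]
    exact isRoot_Chi_prod hpow hμ
end
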